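/- (Key inequality in the proof of Theorem 2) In any SPIR scheme on a graph G satisfying the system model: if server i is one of the two servers storing message W_k and randomness R_k, then the answer of server i given all the other messages, all the other randomness, and the query randomness is bounded by the entropy of R_k: H(A_i^{[k]} | W_k̄, R_k̄, 𝒬) ≤ H(R_k). -/

import Mathlib

open Finset

noncomputable section

namespace SPIR

variable {Ω : Type} [Fintype Ω]

/-- Probability of an event under the probability mass function `μ`
on the finite sample space `Ω`. -/
def pr (μ : Ω → ℝ) (E : Set Ω) : ℝ := ∑ ω, E.indicator μ ω

/-- Shannon entropy of the random variable `X`, measured in `q`-ary units. -/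
def ent (q : ℕ) (μ : Ω → ℝ) {α : Type*} (X : Ω → α) : ℝ :=
  -∑ ω, μ ω * Real.logb q (pr μ {ω' | X ω' = X ω})

/-- Conditional Shannon entropy `H(X | Y)` in `q`-ary units. -/
def condEnt (q : ℕ) (μ : Ω → ℝ) {α β : Type*} (X : Ω → α) (Y : Ω → β) : ℝ :=
  ent q μ (fun ω => (X ω, Y ω)) - ent q μ Y

/-- Mutual information `I(X ; Y)` in `q`-ary units. -/
def mutInf (q : ℕ) (μ : Ω → ℝ) {α β : Type*} (X : Ω → α) (Y : Ω → β) : ℝ :=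
  ent q μ X + ent q μ Y - ent q μ (fun ω => (X ω, Y ω))

/-- Two random variables have the same (joint) distribution. -/
def IdentDist (μ : Ω → ℝ) {α : Type*} (X Y : Ω → α) : Prop :=
  ∀ s : Set α, pr μ (X ⁻¹' s) = pr μ (Y ⁻¹' s)

/-- Independence of two random variables. -/
def IndepRV (μ : Ω → ℝ) {α β : Type*} (X : Ω → α) (Y : Ω → β) : Prop :=
  ∀ (s : Set α) (t : Set β),
    pr μ (X ⁻¹' s ∩ Y ⁻¹' t) = pr μ (X ⁻¹' s) * pr μ (Y ⁻¹' t)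

/-- A symmetric private information retrieval (SPIR) scheme on a graph-replicated
database, following the system model:  `N` servers are the vertices of a simple graph
whose `K` edges are messages; message `W k` (uniform on `F^L`) and the message-specific
common randomness `R k` are stored exactly at the two endpoints `e1 k`, `e2 k` of
edge `k`.  All Shannon quantities are in `q`-ary units, `q = |F|`. -/
structure Scheme (q N K L : ℕ) (F : Type) [Field F] [Fintype F]
    (Ω : Type) [Fintype Ω] where
  /-- the underlying probability mass function -/
  μ : Ω → ℝ
  μ_nonneg : ∀ ω, 0 ≤ μ ω
  μ_sum : ∑ ω, μ ω = 1
  card_F : Fintype.card F = q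
  /-- first endpoint of each edge (message) -/
  e1 : Fin K → Fin N
  /-- second endpoint of each edge (message) -/
  e2 : Fin K → Fin N
  edge_ne : ∀ k, e1 k ≠ e2 k
  /-- the graph is simple: distinct edges have distinct endpoint sets -/
  edge_inj : ∀ k k', ({e1 k, e2 k} : Set (Fin N)) = {e1 k', e2 k'} → k = k'
  /-- alphabet of the queries -/
  QT : Type
  /-- alphabet of the answers -/
  AT : Type
  /-- alphabet of the common randomness -/
  RT : Type
  /-- alphabet of the user's query randomness -/
  UT : Type
  /-- the messages -/
  W : Fin K → Ω → Fin L → F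
  /-- the message-specific common randomness -/
  R : Fin K → Ω → RT
  /-- the user's query randomness `𝒬` -/
  U : Ω → UT
  /-- `Q n k` : query sent to server `n` when the desired message index is `k` -/
  Q : Fin N → Fin K → Ω → QT
  /-- `A n k` : answer of server `n` when the desired message index is `k` -/
  A : Fin N → Fin K → Ω → AT
  /-- the messages are jointly independent, each uniform on `F^L` -/
  W_unif : ∀ w : Fin K → Fin L → F,
    pr μ {ω | (fun k => W k ω) = w} = (1 / (q : ℝ) ^ L) ^ K
  /-- the common randomness variables are jointly independent of each other and of the
  messages -/
  R_indep : ∀ (s : Fin K → Set RT) (t : Set (Fin K → Fin L → F)),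
    pr μ {ω | (fun k => W k ω) ∈ t ∧ ∀ k, R k ω ∈ s k}
      = pr μ {ω | (fun k => W k ω) ∈ t} * ∏ k, pr μ {ω | R k ω ∈ s k}
  /-- the common randomness variables are identically distributed -/
  R_ident : ∀ k k', IdentDist μ (R k) (R k')
  /-- the user's query randomness is independent of `(𝒲, ℛ)` -/
  U_indep : IndepRV μ U (fun ω => (fun k => W k ω, fun k => R k ω))
  /-- the queries are a deterministic function of `𝒬` -/
  query_det : ∀ k, condEnt q μ (fun ω (n : Fin N) => Q n k ω) U = 0
  /-- the answer of a server is a deterministic function of its query, its stored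
  messages `𝒲ₙ` and its stored randomness `ℛₙ` -/
  answer_det : ∀ n k, condEnt q μ (A n k)
    (fun ω => (Q n k ω,
      fun j : {j : Fin K // e1 j = n ∨ e2 j = n} => W j ω,
      fun j : {j : Fin K // e1 j = n ∨ e2 j = n} => R j ω)) = 0
  /-- user privacy: `(Qₙ^[k], Aₙ^[k], 𝒲ₙ, ℛₙ)` has the same distribution for all `k` -/
  user_privacy : ∀ (n : Fin N) (k k' : Fin K), IdentDist μ
    (fun ω => (Q n k ω, A n k ω,
      fun j : {j : Fin K // e1 j = n ∨ e2 j = n} => W j ω,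
      fun j : {j : Fin K // e1 j = n ∨ e2 j = n} => R j ω))
    (fun ω => (Q n k' ω, A n k' ω,
      fun j : {j : Fin K // e1 j = n ∨ e2 j = n} => W j ω,
      fun j : {j : Fin K // e1 j = n ∨ e2 j = n} => R j ω))
  /-- reliability: the desired message is recovered from all answers and `𝒬` -/
  reliability : ∀ k, condEnt q μ (W k)
    (fun ω => (fun n : Fin N => A n k ω, U ω)) = 0
  /-- database privacy -/
  db_privacy : ∀ (k : Fin K) (J : Set (Fin K)), k ∉ J →
    mutInf q μ (fun ω => fun j : J => W j ω)
      (fun ω => (fun n : Fin N => A n k ω,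
        fun n : Fin N => Q n k ω,
        fun ℓ : {ℓ : Fin K // ℓ ∉ J} => R ℓ ω,
        fun ℓ : {ℓ : Fin K // ℓ ∉ J ∧ ℓ ≠ k} => W ℓ ω,
        U ω)) = 0
  /-- randomness recoverability at each server storing `R j` -/
  rand_recov : ∀ (k j : Fin K) (n : Fin N), (e1 j = n ∨ e2 j = n) →
    condEnt q μ (R j)
      (fun ω => (A n k ω,
        fun m : {m : Fin K // e1 m = n ∨ e2 m = n} => W m ω,
        fun m : {m : Fin K // (e1 m = n ∨ e2 m = n) ∧ m ≠ j} => R m ω,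
        Q n k ω)) = 0

/-- The simple graph underlying an SPIR scheme. -/
def schemeGraph {q N K L : ℕ} {F : Type} [Field F] [Fintype F]
    {Ω : Type} [Fintype Ω] (S : Scheme q N K L F Ω) : SimpleGraph (Fin N) :=
  SimpleGraph.fromRel (fun i j => ∃ k, S.e1 k = i ∧ S.e2 k = j)

/-!
Write `A = A_i^[k]` and let `L` be the rest of what server `i` sees: its query and its stored
messages and randomness other than `W k`, `R k`. As `L` is a function of `(W_k̄, R_k̄, 𝒬)`,
conditioning reduces entropy: `H(A | W_k̄, R_k̄, 𝒬) ≤ H(A | L)`. By user privacy `I(W k; A, L)`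
equals the same quantity for a desired index `j ≠ k`, and data processing bounds the latter by
the leakage about `W k` that database privacy forbids when `W j` is retrieved; so
`I(W k; A, L) = 0`. Finally `A` is a function of `(W k, R k, L)` and, by randomness
recoverability, `R k` is a function of `(W k, A, L)`, whence
`H(W k) + H(A, L) = H(W k, A, L) = H(W k, R k, L) ≤ H(W k) + H(R k) + H(L)`.
-/

structure IsPMF (μ : Ω → ℝ) : Prop where
  nonneg : 0 ≤ μ
  sum_eq_one : ∑ ω, μ ω = 1

def pmf (μ : Ω → ℝ) {α : Type*} (X : Ω → α) (x : α) : ℝ := pr μ {ω | X ω = x}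

def IsFunctionOf (μ : Ω → ℝ) {α β : Type*} (X : Ω → α) (Y : Ω → β) : Prop :=
  ∀ ω ω', μ ω ≠ 0 → μ ω' ≠ 0 → Y ω = Y ω' → X ω = X ω'

section Probability

variable {μ : Ω → ℝ} {α β γ : Type*}

lemma pr_univ : pr μ Set.univ = ∑ ω, μ ω := by
  simp only [pr, Set.indicator_univ]

lemma pr_mono (hμ : 0 ≤ μ) {E F : Set Ω} (h : E ⊆ F) : pr μ E ≤ pr μ F :=
  Finset.sum_le_sum fun ω _ => Set.indicator_le_indicator_of_subset h hμ ω

lemma pr_lt_pr (hμ : 0 ≤ μ) {E F : Set Ω} (h : E ⊆ F) {ω : Ω} (hF : ω ∈ F) (hE : ω ∉ E)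
    (hω : μ ω ≠ 0) : pr μ E < pr μ F := by
  refine Finset.sum_lt_sum (fun ω _ => Set.indicator_le_indicator_of_subset h hμ ω)
    ⟨ω, Finset.mem_univ ω, ?_⟩
  rw [Set.indicator_of_notMem hE, Set.indicator_of_mem hF]
  exact (hμ ω).lt_of_ne' hω

lemma pr_pos (hμ : 0 ≤ μ) {E : Set Ω} {ω : Ω} (h : ω ∈ E) (hω : μ ω ≠ 0) : 0 < pr μ E := by
  simpa [pr] using pr_lt_pr hμ (Set.empty_subset E) h (Set.notMem_empty ω) hω

lemma pr_congr {E F : Set Ω} (h : ∀ ω, μ ω ≠ 0 → (ω ∈ E ↔ ω ∈ F)) : pr μ E = pr μ F := by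
  classical
  unfold pr
  refine Finset.sum_congr rfl fun ω _ => ?_
  by_cases hω : μ ω = 0
  · simp [Set.indicator_apply, hω]
  · simp [Set.indicator_apply, h ω hω]

lemma pmf_nonneg (hμ : 0 ≤ μ) (X : Ω → α) (x : α) : 0 ≤ pmf μ X x :=
  Finset.sum_nonneg fun ω _ => Set.indicator_nonneg (fun ω _ => hμ ω) ω

lemma pmf_pos (hμ : 0 ≤ μ) (X : Ω → α) {ω : Ω} (hω : μ ω ≠ 0) : 0 < pmf μ X (X ω) :=
  pr_pos hμ rfl hω

lemma sum_mul_comp_eq (V : Ω → α) {t : Finset α} (ht : ∀ ω, V ω ∈ t) (g : α → ℝ) :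
    ∑ ω, μ ω * g (V ω) = ∑ v ∈ t, pmf μ V v * g v := by
  classical
  simp only [pmf, pr, Finset.sum_mul, Set.indicator_apply, Set.mem_ofPred_eq, ite_mul, zero_mul]
  rw [Finset.sum_comm]
  refine Finset.sum_congr rfl fun ω _ => ?_
  rw [Finset.sum_ite_eq t (V ω) (fun v => μ ω * g v), if_pos (ht ω)]

lemma sum_pmf_pair_left (X : Ω → α) (Y : Ω → β) {t : Finset α} (ht : ∀ ω, X ω ∈ t) (y : β) :
    ∑ x ∈ t, pmf μ (fun ω => (X ω, Y ω)) (x, y) = pmf μ Y y := by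
  classical
  simp only [pmf, pr, Set.indicator_apply, Set.mem_ofPred_eq, Prod.mk.injEq]
  rw [Finset.sum_comm]
  refine Finset.sum_congr rfl fun ω _ => ?_
  by_cases hy : Y ω = y
  · simp only [hy, and_true]
    rw [Finset.sum_ite_eq t (X ω) (fun _ => μ ω), if_pos (ht ω), if_pos trivial]
  · simp [hy]

lemma sum_pmf (hμ : ∑ ω, μ ω = 1) (X : Ω → α) {t : Finset α} (ht : ∀ ω, X ω ∈ t) :
    ∑ x ∈ t, pmf μ X x = 1 := by
  have h := sum_pmf_pair_left (μ := μ) X (fun _ => ()) ht ()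
  simp only [pmf, Prod.mk.injEq, and_true, Set.ofPred_true, pr_univ, hμ] at h
  exact h

end Probability

section Entropy

open Real

variable {μ : Ω → ℝ} {q : ℕ} {α β γ δ : Type*}

lemma ent_eq_neg_sum (X : Ω → α) : ent q μ X = -∑ ω, μ ω * logb q (pmf μ X (X ω)) := rfl

lemma ent_eq_neg_sum_pmf (X : Ω → α) {t : Finset α} (ht : ∀ ω, X ω ∈ t) :
    ent q μ X = -∑ x ∈ t, pmf μ X x * logb q (pmf μ X x) :=
  congrArg Neg.neg (sum_mul_comp_eq X ht fun x => logb q (pmf μ X x))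

lemma ent_congr {X : Ω → α} {Y : Ω → β}
    (h : ∀ ω ω', μ ω ≠ 0 → μ ω' ≠ 0 → (X ω = X ω' ↔ Y ω = Y ω')) : ent q μ X = ent q μ Y := by
  unfold ent
  congr 1
  refine Finset.sum_congr rfl fun ω _ => ?_
  by_cases hω : μ ω = 0
  · simp [hω]
  · exact congrArg (fun p => μ ω * logb q p) (pr_congr fun ω' hω' => h ω' ω hω' hω)

lemma ent_pair_eq_left {X : Ω → α} {Y : Ω → β} (h : IsFunctionOf μ Y X) :
    ent q μ (fun ω => (X ω, Y ω)) = ent q μ X :=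
  ent_congr fun ω ω' hω hω' => by
    simp only [Prod.mk.injEq]
    exact ⟨And.left, fun hX => ⟨hX, h ω ω' hω hω' hX⟩⟩

lemma ent_swap (X : Ω → α) (Y : Ω → β) :
    ent q μ (fun ω => (Y ω, X ω)) = ent q μ (fun ω => (X ω, Y ω)) :=
  ent_congr fun _ _ _ _ => by simp only [Prod.mk.injEq, and_comm]

lemma ent_const (hμ : ∑ ω, μ ω = 1) (c : α) : ent q μ (fun _ => c) = 0 := by
  simp [ent, pr_univ, hμ]

lemma ent_comp_eq_of_identDist {τ : Type*} {T T' : Ω → τ} (h : IdentDist μ T T') (f : τ → α) :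
    ent q μ (fun ω => f (T ω)) = ent q μ (fun ω => f (T' ω)) := by
  classical
  set t := Finset.univ.image (fun ω => f (T ω)) ∪ Finset.univ.image (fun ω => f (T' ω))
  rw [ent_eq_neg_sum_pmf _ (t := t) (by simp [t]), ent_eq_neg_sum_pmf _ (t := t) (by simp [t])]
  have hpmf : ∀ x, pmf μ (fun ω => f (T ω)) x = pmf μ (fun ω => f (T' ω)) x :=
    fun x => h {v | f v = x}
  simp only [hpmf]

lemma mutInf_comp_eq_of_identDist {τ : Type*} {T T' : Ω → τ}
    (h : IdentDist μ T T') (f : τ → α) (g : τ → β) :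
    mutInf q μ (fun ω => f (T ω)) (fun ω => g (T ω))
      = mutInf q μ (fun ω => f (T' ω)) (fun ω => g (T' ω)) := by
  unfold mutInf
  rw [ent_comp_eq_of_identDist h f, ent_comp_eq_of_identDist h g,
    ent_comp_eq_of_identDist h fun t => (f t, g t)]

lemma sum_mul_logb_nonpos (hq : 1 < q) (hμ : IsPMF μ) {f : Ω → ℝ}
    (hf : ∀ ω, μ ω ≠ 0 → 0 < f ω) (h : ∑ ω, μ ω * f ω ≤ 1) :
    ∑ ω, μ ω * logb q (f ω) ≤ 0 := by
  have hlogq : 0 < log q := log_pos (by exact_mod_cast hq)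
  calc ∑ ω, μ ω * logb q (f ω) ≤ ∑ ω, μ ω * (f ω - 1) / log q := by
        refine Finset.sum_le_sum fun ω _ => ?_
        by_cases hω : μ ω = 0
        · simp [hω]
        rw [logb, mul_div_assoc]
        exact mul_le_mul_of_nonneg_left
          (div_le_div_of_nonneg_right (log_le_sub_one_of_pos (hf ω hω)) hlogq.le) (hμ.nonneg ω)
    _ = (∑ ω, μ ω * f ω - 1) / log q := by
        simp only [← Finset.sum_div, mul_sub, mul_one, Finset.sum_sub_distrib, hμ.sum_eq_one]
    _ ≤ 0 := div_nonpos_of_nonpos_of_nonneg (by linarith) hlogq.le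

lemma sum_mul_pmf_ratio_le_one (hμ : IsPMF μ) (X : Ω → α) (Y : Ω → β) (Z : Ω → γ) :
    ∑ ω, μ ω * (pmf μ (fun ω => (X ω, Z ω)) (X ω, Z ω) * pmf μ (fun ω => (Y ω, Z ω)) (Y ω, Z ω)
      / (pmf μ (fun ω => (X ω, Y ω, Z ω)) (X ω, Y ω, Z ω) * pmf μ Z (Z ω))) ≤ 1 := by
  classical
  set tX := Finset.univ.image X
  set tY := Finset.univ.image Y
  set tZ := Finset.univ.image Z
  set pXZ := pmf μ (fun ω => (X ω, Z ω))
  set pYZ := pmf μ (fun ω => (Y ω, Z ω))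
  set pZ := pmf μ Z
  refine (sum_mul_comp_eq (fun ω => (X ω, Y ω, Z ω)) (t := tX ×ˢ tY ×ˢ tZ) (by simp [tX, tY, tZ])
    fun v => pXZ (v.1, v.2.2) * pYZ (v.2.1, v.2.2) / (pmf μ _ v * pZ v.2.2)).trans_le ?_
  calc _ ≤ ∑ v ∈ tX ×ˢ tY ×ˢ tZ, pXZ (v.1, v.2.2) * pYZ (v.2.1, v.2.2) / pZ v.2.2 := by
        refine Finset.sum_le_sum fun v _ => ?_
        by_cases hv : pmf μ (fun ω => (X ω, Y ω, Z ω)) v = 0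
        · rw [hv, zero_mul]
          exact div_nonneg (mul_nonneg (pmf_nonneg hμ.nonneg _ _) (pmf_nonneg hμ.nonneg _ _))
            (pmf_nonneg hμ.nonneg _ _)
        · rw [mul_div_assoc', mul_div_mul_left _ _ hv]
    _ = ∑ z ∈ tZ, (∑ x ∈ tX, pXZ (x, z)) * (∑ y ∈ tY, pYZ (y, z)) / pZ z := by
        simp only [Finset.sum_product, Finset.sum_mul_sum, Finset.sum_div]
        exact (Finset.sum_congr rfl fun x _ => Finset.sum_comm).trans Finset.sum_comm
    _ = ∑ z ∈ tZ, pZ z := by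
        refine Finset.sum_congr rfl fun z _ => ?_
        rw [sum_pmf_pair_left X Z (by simp [tX]), sum_pmf_pair_left Y Z (by simp [tY]),
          mul_self_div_self]
    _ = 1 := sum_pmf hμ.sum_eq_one Z (by simp [tZ])

lemma ent_submodular (hq : 1 < q) (hμ : IsPMF μ) (X : Ω → α) (Y : Ω → β) (Z : Ω → γ) :
    ent q μ (fun ω => (X ω, Y ω, Z ω)) + ent q μ Z
      ≤ ent q μ (fun ω => (X ω, Z ω)) + ent q μ (fun ω => (Y ω, Z ω)) := by
  have hgibbs := sum_mul_logb_nonpos hq hμ (fun ω hω => div_pos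
    (mul_pos (pmf_pos hμ.nonneg (fun ω => (X ω, Z ω)) hω)
      (pmf_pos hμ.nonneg (fun ω => (Y ω, Z ω)) hω))
    (mul_pos (pmf_pos hμ.nonneg (fun ω => (X ω, Y ω, Z ω)) hω) (pmf_pos hμ.nonneg Z hω)))
    (sum_mul_pmf_ratio_le_one hμ X Y Z)
  have hlog : ∀ ω, μ ω * logb q (pmf μ (fun ω => (X ω, Z ω)) (X ω, Z ω)
        * pmf μ (fun ω => (Y ω, Z ω)) (Y ω, Z ω)
        / (pmf μ (fun ω => (X ω, Y ω, Z ω)) (X ω, Y ω, Z ω) * pmf μ Z (Z ω)))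
      = μ ω * logb q (pmf μ (fun ω => (X ω, Z ω)) (X ω, Z ω))
        + μ ω * logb q (pmf μ (fun ω => (Y ω, Z ω)) (Y ω, Z ω))
        - μ ω * logb q (pmf μ (fun ω => (X ω, Y ω, Z ω)) (X ω, Y ω, Z ω))
        - μ ω * logb q (pmf μ Z (Z ω)) := fun ω => by
    by_cases hω : μ ω = 0
    · simp [hω]
    have h1 := (pmf_pos hμ.nonneg (fun ω => (X ω, Z ω)) hω).ne'
    have h2 := (pmf_pos hμ.nonneg (fun ω => (Y ω, Z ω)) hω).ne'
    have h3 := (pmf_pos hμ.nonneg (fun ω => (X ω, Y ω, Z ω)) hω).ne'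
    have h4 := (pmf_pos hμ.nonneg Z hω).ne'
    rw [logb_div (mul_ne_zero h1 h2) (mul_ne_zero h3 h4), logb_mul h1 h2, logb_mul h3 h4]
    ring
  beta_reduce at hgibbs
  simp only [hlog, Finset.sum_sub_distrib, Finset.sum_add_distrib] at hgibbs
  simp only [ent_eq_neg_sum]
  linarith

lemma isFunctionOf_of_condEnt_eq_zero (hq : 1 < q) (hμ : 0 ≤ μ) {X : Ω → α} {Y : Ω → β}
    (h : condEnt q μ X Y = 0) : IsFunctionOf μ X Y := by
  set XY := fun ω => (X ω, Y ω)
  have hsub : ∀ ω, {ω' | XY ω' = XY ω} ⊆ {ω' | Y ω' = Y ω} := fun ω ω' h' => congrArg Prod.snd h'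
  have hterm : ∀ ω, 0 ≤ μ ω * (logb q (pmf μ Y (Y ω)) - logb q (pmf μ XY (XY ω))) := fun ω => by
    by_cases hω : μ ω = 0
    · simp [hω]
    exact mul_nonneg (hμ ω) (sub_nonneg.2 (logb_le_logb_of_le (by exact_mod_cast hq)
      (pmf_pos hμ XY hω) (pr_mono hμ (hsub ω))))
  have hsum : ∑ ω, μ ω * (logb q (pmf μ Y (Y ω)) - logb q (pmf μ XY (XY ω))) = 0 := by
    rw [← h, condEnt, ent_eq_neg_sum XY, ent_eq_neg_sum Y]
    simp only [mul_sub, Finset.sum_sub_distrib]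
    ring
  intro ω ω' hω hω' hY
  by_contra hX
  have hlt : pmf μ XY (XY ω) < pmf μ Y (Y ω) :=
    pr_lt_pr hμ (hsub ω) hY.symm (fun h' => hX (congrArg Prod.fst h').symm) hω'
  refine (Finset.sum_pos' (fun ω _ => hterm ω) ⟨ω, Finset.mem_univ ω, ?_⟩).ne' hsum
  exact mul_pos ((hμ ω).lt_of_ne' hω)
    (sub_pos.2 (logb_lt_logb (by exact_mod_cast hq) (pmf_pos hμ XY hω) hlt))

lemma condEnt_le_condEnt_of_isFunctionOf (hq : 1 < q) (hμ : IsPMF μ) (X : Ω → α)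
    {Y : Ω → β} {Z : Ω → γ} (h : IsFunctionOf μ Z Y) : condEnt q μ X Y ≤ condEnt q μ X Z := by
  have hsub := ent_submodular hq hμ X Y Z
  have hXY : ent q μ (fun ω => (X ω, Y ω, Z ω)) = ent q μ (fun ω => (X ω, Y ω)) :=
    ent_congr fun ω ω' hω hω' => by
      simp only [Prod.mk.injEq]
      exact ⟨fun h' => ⟨h'.1, h'.2.1⟩, fun h' => ⟨h'.1, h'.2, h ω ω' hω hω' h'.2⟩⟩
  rw [hXY, ent_pair_eq_left h] at hsub
  unfold condEnt
  linarith

lemma ent_pair_le (hq : 1 < q) (hμ : IsPMF μ) (X : Ω → α) (Y : Ω → β) :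
    ent q μ (fun ω => (X ω, Y ω)) ≤ ent q μ X + ent q μ Y := by
  have h := condEnt_le_condEnt_of_isFunctionOf hq hμ X (Y := Y) (Z := fun _ => ())
    fun _ _ _ _ _ => rfl
  rw [condEnt, condEnt, ent_pair_eq_left (X := X) (Y := fun _ : Ω => ()) fun _ _ _ _ _ => rfl,
    ent_const hμ.sum_eq_one] at h
  linarith

lemma mutInf_le_mutInf_of_isFunctionOf (hq : 1 < q) (hμ : IsPMF μ) {X : Ω → α} {X' : Ω → γ}
    {Y : Ω → β} {Y' : Ω → δ} (hX : IsFunctionOf μ X X') (hY : IsFunctionOf μ Y Y') :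
    mutInf q μ X Y ≤ mutInf q μ X' Y' := by
  have hXY := condEnt_le_condEnt_of_isFunctionOf hq hμ X hY
  have hYX := condEnt_le_condEnt_of_isFunctionOf hq hμ Y' hX
  unfold condEnt at hXY hYX
  unfold mutInf
  rw [ent_swap X' Y', ent_swap X Y'] at hYX
  linarith

lemma condEnt_le_ent_of_mutInf_nonpos (hq : 1 < q) (hμ : IsPMF μ) {W : Ω → α} {R : Ω → β}
    {A : Ω → γ} {L : Ω → δ} (hleak : mutInf q μ W (fun ω => (A ω, L ω)) ≤ 0)
    (hA : IsFunctionOf μ A (fun ω => (W ω, R ω, L ω)))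
    (hR : IsFunctionOf μ R (fun ω => (W ω, A ω, L ω))) :
    condEnt q μ A L ≤ ent q μ R := by
  have hjoint : ent q μ (fun ω => (W ω, A ω, L ω)) = ent q μ (fun ω => ((W ω, R ω), L ω)) :=
    ent_congr fun ω ω' hω hω' => by
      constructor
      · intro h
        simp only [Prod.mk.injEq] at h ⊢
        exact ⟨⟨h.1, hR ω ω' hω hω' (by simp [h])⟩, h.2.2⟩
      · intro h
        simp only [Prod.mk.injEq] at h ⊢
        exact ⟨h.1.1, hA ω ω' hω hω' (by simp [h]), h.2⟩
  have h1 := ent_pair_le hq hμ (fun ω => (W ω, R ω)) L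
  have h2 := ent_pair_le hq hμ W R
  unfold mutInf at hleak
  unfold condEnt
  linarith

end Entropy

lemma restrict_eq_of_eq_of_forall_ne {ι β : Type*} {P : ι → Prop} (f g : ι → β) (k : ι)
    (hk : f k = g k) (h : ∀ m : {m // P m ∧ m ≠ k}, f m = g m) :
    (fun j : {j // P j} => f j) = fun j : {j // P j} => g j := by
  funext j
  by_cases hj : (j : ι) = k
  · rw [hj, hk]
  · exact h ⟨j, j.2, hj⟩

namespace Scheme

variable {q N K L : ℕ} {F : Type} [Field F] [Fintype F] (S : Scheme q N K L F Ω)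

lemma isPMF : IsPMF S.μ := ⟨S.μ_nonneg, S.μ_sum⟩

lemma one_lt_q (S : Scheme q N K L F Ω) : 1 < q := S.card_F ▸ Fintype.one_lt_card

def sideInfo (n : Fin N) (j k : Fin K) (ω : Ω) :
    S.QT × ({m : Fin K // (S.e1 m = n ∨ S.e2 m = n) ∧ m ≠ k} → Fin L → F) ×
      ({m : Fin K // (S.e1 m = n ∨ S.e2 m = n) ∧ m ≠ k} → S.RT) :=
  (S.Q n j ω, fun m => S.W m ω, fun m => S.R m ω)

lemma isFunctionOf_sideInfo (n : Fin N) (j k : Fin K) :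
    IsFunctionOf S.μ (S.sideInfo n j k) (fun ω => (fun m : {m : Fin K // m ≠ k} => S.W m ω,
      fun m : {m : Fin K // m ≠ k} => S.R m ω, S.U ω)) := by
  have hQ := isFunctionOf_of_condEnt_eq_zero S.one_lt_q S.isPMF.nonneg (S.query_det j)
  intro ω ω' hω hω' h
  simp only [Prod.mk.injEq] at h
  obtain ⟨hW, hR, hU⟩ := h
  simp only [sideInfo, Prod.mk.injEq]
  exact ⟨congrFun (hQ ω ω' hω hω' hU) n, funext fun m => congrFun hW ⟨m, m.2.2⟩,
    funext fun m => congrFun hR ⟨m, m.2.2⟩⟩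

lemma answer_isFunctionOf (n : Fin N) (j k : Fin K) :
    IsFunctionOf S.μ (S.A n j) (fun ω => (S.W k ω, S.R k ω, S.sideInfo n j k ω)) := by
  have hA := isFunctionOf_of_condEnt_eq_zero S.one_lt_q S.isPMF.nonneg (S.answer_det n j)
  intro ω ω' hω hω' h
  simp only [sideInfo, Prod.mk.injEq] at h
  obtain ⟨hWk, hRk, hQ, hW, hR⟩ := h
  refine hA ω ω' hω hω' ?_
  simp only [Prod.mk.injEq]
  exact ⟨hQ, restrict_eq_of_eq_of_forall_ne (S.W · ω) (S.W · ω') k hWk (congrFun hW),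
    restrict_eq_of_eq_of_forall_ne (S.R · ω) (S.R · ω') k hRk (congrFun hR)⟩

lemma randomness_isFunctionOf {n : Fin N} {k : Fin K} (hn : S.e1 k = n ∨ S.e2 k = n)
    (j : Fin K) :
    IsFunctionOf S.μ (S.R k) (fun ω => (S.W k ω, S.A n j ω, S.sideInfo n j k ω)) := by
  have hR := isFunctionOf_of_condEnt_eq_zero S.one_lt_q S.isPMF.nonneg (S.rand_recov j k n hn)
  intro ω ω' hω hω' h
  simp only [sideInfo, Prod.mk.injEq] at h
  obtain ⟨hWk, hA, hQ, hW, hRk⟩ := h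
  refine hR ω ω' hω hω' ?_
  simp only [Prod.mk.injEq]
  exact ⟨hA, restrict_eq_of_eq_of_forall_ne (S.W · ω) (S.W · ω') k hWk (congrFun hW), hRk, hQ⟩

lemma mutInf_message_answer_le_zero (n : Fin N) {j k : Fin K} (hjk : j ≠ k) :
    mutInf q S.μ (S.W k) (fun ω => (S.A n j ω, S.sideInfo n j k ω)) ≤ 0 := by
  -- `sideInfo n j k` may contain `W j`, which reliability recovers from the answers and `𝒬`.
  have hW := isFunctionOf_of_condEnt_eq_zero S.one_lt_q S.isPMF.nonneg (S.reliability j)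
  rw [← S.db_privacy j {k} hjk]
  refine mutInf_le_mutInf_of_isFunctionOf S.one_lt_q S.isPMF
    (fun ω ω' _ _ h => congrFun h ⟨k, rfl⟩) fun ω ω' hω hω' h => ?_
  simp only [Prod.mk.injEq] at h
  obtain ⟨hA, hQ, hR, hW', hU⟩ := h
  have hWj : S.W j ω = S.W j ω' := hW ω ω' hω hω' (by simp only [hA, hU])
  simp only [sideInfo, Prod.mk.injEq]
  exact ⟨congrFun hA n, congrFun hQ n,
    restrict_eq_of_eq_of_forall_ne (S.W · ω) (S.W · ω') j hWj
      fun m => congrFun hW' ⟨m, m.2.1.2, m.2.2⟩,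
    funext fun m => congrFun hR ⟨m, m.2.2⟩⟩

lemma mutInf_message_answer_eq {n : Fin N} {k : Fin K} (hn : S.e1 k = n ∨ S.e2 k = n)
    (j j' : Fin K) :
    mutInf q S.μ (S.W k) (fun ω => (S.A n j ω, S.sideInfo n j k ω))
      = mutInf q S.μ (S.W k) (fun ω => (S.A n j' ω, S.sideInfo n j' k ω)) :=
  mutInf_comp_eq_of_identDist (S.user_privacy n j j') (fun v => v.2.2.1 ⟨k, hn⟩)
    fun v => (v.2.1, v.1, fun m : {m // (S.e1 m = n ∨ S.e2 m = n) ∧ m ≠ k} => v.2.2.1 ⟨m, m.2.1⟩,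
      fun m : {m // (S.e1 m = n ∨ S.e2 m = n) ∧ m ≠ k} => v.2.2.2 ⟨m, m.2.1⟩)

end Scheme

theorem answer_entropy_le_randomness_general
    {q N K L : ℕ} {F : Type} [Field F] [Fintype F] {Ω : Type} [Fintype Ω]
    (hK : 2 ≤ K)
    (S : Scheme q N K L F Ω) (k : Fin K) (i : Fin N)
    (hi : S.e1 k = i ∨ S.e2 k = i) :
    condEnt q S.μ (S.A i k)
      (fun ω => (fun m : {m : Fin K // m ≠ k} => S.W m ω,
                 fun m : {m : Fin K // m ≠ k} => S.R m ω, S.U ω))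
      ≤ ent q S.μ (S.R k) := by
  have : Nontrivial (Fin K) := Fin.nontrivial_iff_two_le.2 hK
  obtain ⟨j, hjk⟩ := exists_ne k
  have hleak : mutInf q S.μ (S.W k) (fun ω => (S.A i k ω, S.sideInfo i k k ω)) ≤ 0 :=
    (S.mutInf_message_answer_eq hi k j).trans_le (S.mutInf_message_answer_le_zero i hjk)
  calc _ ≤ condEnt q S.μ (S.A i k) (S.sideInfo i k k) :=
        condEnt_le_condEnt_of_isFunctionOf S.one_lt_q S.isPMF _ (S.isFunctionOf_sideInfo i k k)
    _ ≤ ent q S.μ (S.R k) :=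
        condEnt_le_ent_of_mutInf_nonpos S.one_lt_q S.isPMF hleak
          (S.answer_isFunctionOf i k k) (S.randomness_isFunctionOf hi k)

/-- **Key inequality in the proof of Theorem 2.** If server `i` is one of the two
servers storing message `W k` and randomness `R k`, then
`H(A_i^[k] | W_k̄, R_k̄, 𝒬) ≤ H(R k)`. -/
theorem answer_entropy_le_randomness
    {q N K L : ℕ} {F : Type} [Field F] [Fintype F] {Ω : Type} [Fintype Ω]
    (hN : 3 ≤ N) (hK : 2 ≤ K) (hL : 1 ≤ L)
    (S : Scheme q N K L F Ω) (k : Fin K) (i : Fin N)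
    (hi : S.e1 k = i ∨ S.e2 k = i) :
    condEnt q S.μ (S.A i k)
      (fun ω => (fun m : {m : Fin K // m ≠ k} => S.W m ω,
                 fun m : {m : Fin K // m ≠ k} => S.R m ω, S.U ω))
      ≤ ent q S.μ (S.R k) :=
  answer_entropy_le_randomness_general hK S k i hi

end SPIR
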